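/- arXiv:1803.06156 — 3 statements merged into one kernel-verified Lean document; each statement's English description precedes it below -/
import Mathlib

section
/- For each partition 𝓘 of {1,...,N} there exists a partition 𝓘' such that every segment of 𝓘', except possibly the leftmost one, has length at least k, and such that Σ_{I'∈𝓘'} E^{I'} ≤ Σ_{I∈𝓘} E^I and |𝓘'| ≤ |𝓘|. -/
open Finset Matrix

/-- `diffEnergy k q v = ‖∇ᵏ v‖₂²`, where `∇ᵏ` is the k-th order finite difference
operator whose rows are shifts of the k-fold convolution of `(-1, 1)` with itself;
it is the empty map (energy `0`) when `q ≤ k`. -/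
noncomputable def diffEnergy (k q : ℕ) (v : Fin q → ℝ) : ℝ :=
  ∑ i : Fin (q - k), (∑ j : Fin (k + 1),
    (-1 : ℝ) ^ (k - j.val) * (Nat.choose k j.val : ℝ) *
      v ⟨i.val + j.val, by have hi := i.isLt; have hj := j.isLt; omega⟩) ^ 2

/-- The k-th order smoothing spline approximation error
`E = min_v ‖v - g‖₂² + β^{2k} ‖∇ᵏ v‖₂²` for data `g` on an interval of length `q`. -/
noncomputable def splineError (k : ℕ) (β : ℝ) {q : ℕ} (g : Fin q → ℝ) : ℝ :=
  ⨅ v : Fin q → ℝ, (∑ i, (v i - g i) ^ 2) + β ^ (2 * k) * diffEnergy k q v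

/-- A partition of `{1,...,N}` into consecutive discrete intervals, encoded by its
boundaries `0 = b 0 < b 1 < ... < b M = N`; the m-th segment consists of the
(0-indexed) indices `b m, ..., b (m+1) - 1`, and `M` is the number of segments. -/
structure IPart (N : ℕ) where
  M : ℕ
  b : Fin (M + 1) → ℕ
  mono : StrictMono b
  first : b 0 = 0
  last : b (Fin.last M) = N

/-- Length of the `m`-th segment of the partition. -/
def IPart.len {N : ℕ} (P : IPart N) (m : Fin P.M) : ℕ :=
  P.b m.succ - P.b m.castSucc

theorem IPart.idx_lt {N : ℕ} (P : IPart N) (m : Fin P.M) (i : Fin (P.len m)) :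
    P.b m.castSucc + i.val < N := by
  have h1 : i.val < P.b m.succ - P.b m.castSucc := i.isLt
  have h2 : P.b m.succ ≤ N := by
    have h := P.mono.monotone (Fin.le_last m.succ)
    rwa [P.last] at h
  omega

/-- Restriction `f_I` of a signal `f` to the `m`-th segment `I` of the partition. -/
def IPart.restrict {N : ℕ} (P : IPart N) (f : Fin N → ℝ) (m : Fin P.M) :
    Fin (P.len m) → ℝ :=
  fun i => f ⟨P.b m.castSucc + i.val, P.idx_lt m i⟩

/-- Total k-th order spline approximation error `Σ_{I∈𝓘} E^I` of a partition. -/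
noncomputable def segErrSum {N : ℕ} (k : ℕ) (β : ℝ) (f : Fin N → ℝ) (P : IPart N) : ℝ :=
  ∑ m : Fin P.M, splineError k β (P.restrict f m)

/-! Induct on the number of segments, working from the right end. If the last segment is
shorter than `k` and has a left neighbour `[a, N')`, either `N ≤ a + k`, and the two merge into
one segment of error `0`, or the boundary `N'` moves left to `N - k`: the last segment then has
error `0` and its neighbour shrinks, which does not increase its error. Either way what remains
to be fixed has one segment fewer. -/

theorem Fin.sum_castLE_le {q' q : ℕ} (h : q' ≤ q) {t : Fin q → ℝ} (ht : ∀ i, 0 ≤ t i) :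
    ∑ i : Fin q', t (Fin.castLE h i) ≤ ∑ i, t i :=
  calc ∑ i : Fin q', t (Fin.castLE h i) = ∑ i ∈ univ.map (Fin.castLEEmb h), t i :=
        (Finset.sum_map univ (Fin.castLEEmb h) t).symm
    _ ≤ ∑ i, t i := Finset.sum_le_sum_of_subset_of_nonneg (subset_univ _) fun i _ _ => ht i

theorem diffEnergy_nonneg (k q : ℕ) (v : Fin q → ℝ) : 0 ≤ diffEnergy k q v :=
  Finset.sum_nonneg fun _ _ => sq_nonneg _

theorem diffEnergy_eq_zero_of_le {k q : ℕ} (h : q ≤ k) (v : Fin q → ℝ) : diffEnergy k q v = 0 :=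
  have : IsEmpty (Fin (q - k)) := ⟨fun i => absurd i.isLt (by omega)⟩
  Fintype.sum_empty _

theorem diffEnergy_comp_castLE_le (k : ℕ) {q' q : ℕ} (h : q' ≤ q) (v : Fin q → ℝ) :
    diffEnergy k q' (v ∘ Fin.castLE h) ≤ diffEnergy k q v := by
  let row (i : Fin (q - k)) : ℝ := ∑ j : Fin (k + 1),
    (-1 : ℝ) ^ (k - j.val) * (Nat.choose k j.val : ℝ) * v ⟨i.val + j.val, by omega⟩
  exact Fin.sum_castLE_le (t := fun i => row i ^ 2) (Nat.sub_le_sub_right h k) fun _ => sq_nonneg _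

section splineError

variable (k : ℕ) (β : ℝ) {q : ℕ}

theorem splineError_objective_nonneg (g v : Fin q → ℝ) :
    0 ≤ (∑ i, (v i - g i) ^ 2) + β ^ (2 * k) * diffEnergy k q v :=
  add_nonneg (Finset.sum_nonneg fun _ _ => sq_nonneg _)
    (mul_nonneg ((even_two_mul k).pow_nonneg _) (diffEnergy_nonneg k q v))

theorem splineError_le (g v : Fin q → ℝ) :
    splineError k β g ≤ (∑ i, (v i - g i) ^ 2) + β ^ (2 * k) * diffEnergy k q v :=
  ciInf_le ⟨0, Set.forall_mem_range.2 (splineError_objective_nonneg k β g)⟩ v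

theorem splineError_nonneg (g : Fin q → ℝ) : 0 ≤ splineError k β g :=
  le_ciInf (splineError_objective_nonneg k β g)

theorem splineError_eq_zero_of_le (h : q ≤ k) (g : Fin q → ℝ) : splineError k β g = 0 := by
  refine le_antisymm ?_ (splineError_nonneg k β g)
  simpa [diffEnergy_eq_zero_of_le h] using splineError_le k β g g

theorem splineError_comp_castLE_le {q' : ℕ} (h : q' ≤ q) (g : Fin q → ℝ) :
    splineError k β (g ∘ Fin.castLE h) ≤ splineError k β g := by
  refine le_ciInf fun v => (splineError_le k β _ (v ∘ Fin.castLE h)).trans ?_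
  gcongr ?_ + β ^ (2 * k) * ?_
  · exact Fin.sum_castLE_le h fun i => sq_nonneg (v i - g i)
  · exact (even_two_mul k).pow_nonneg _
  · exact diffEnergy_comp_castLE_le k h v

end splineError

/-- `segErr k β F l r` is `E^I` for the interval `I = [l, r)` of the data `F`. -/
noncomputable def segErr (k : ℕ) (β : ℝ) (F : ℕ → ℝ) (l r : ℕ) : ℝ :=
  splineError k β fun i : Fin (r - l) => F (l + i)

section segErr

variable (k : ℕ) (β : ℝ) (F : ℕ → ℝ)

theorem segErr_nonneg (l r : ℕ) : 0 ≤ segErr k β F l r :=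
  splineError_nonneg k β _

theorem segErr_eq_zero_of_le {l r : ℕ} (h : r ≤ l + k) : segErr k β F l r = 0 :=
  splineError_eq_zero_of_le k β (by omega) _

theorem segErr_mono_right (l : ℕ) {r' r : ℕ} (h : r' ≤ r) :
    segErr k β F l r' ≤ segErr k β F l r :=
  splineError_comp_castLE_le k β (Nat.sub_le_sub_right h l) fun i : Fin (r - l) => F (l + i)

end segErr

namespace IPart

variable {N : ℕ}

def cost (E : ℕ → ℕ → ℝ) (P : IPart N) : ℝ :=
  ∑ m : Fin P.M, E (P.b m.castSucc) (P.b m.succ)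

def LongAfterFirst (k : ℕ) (P : IPart N) : Prop :=
  ∀ m : Fin P.M, m.val ≠ 0 → k ≤ P.len m

def snoc {N' : ℕ} (P : IPart N') {N : ℕ} (h : N' < N) : IPart N where
  M := P.M + 1
  b := Fin.snoc P.b N
  mono := by
    simpa only [Fin.insertNth_last'] using Fin.strictMono_insertNth_last P.mono N (by rwa [P.last])
  first := by rw [← Fin.castSucc_zero, Fin.snoc_castSucc, P.first]
  last := Fin.snoc_last ..

section snoc

variable {N' : ℕ} (P : IPart N') (h : N' < N)

@[simp] theorem M_snoc : (P.snoc h).M = P.M + 1 := rfl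

theorem cost_snoc (E : ℕ → ℕ → ℝ) : (P.snoc h).cost E = P.cost E + E N' N := by
  show ∑ m : Fin (P.M + 1), _ = _
  rw [Fin.sum_univ_castSucc]
  simp only [snoc, Fin.succ_castSucc, Fin.snoc_castSucc, Fin.succ_last, Fin.snoc_last, P.last]
  rfl

theorem len_snoc_castSucc (m : Fin P.M) : (P.snoc h).len m.castSucc = P.len m := by
  simp only [len, snoc, Fin.succ_castSucc, Fin.snoc_castSucc]

theorem len_snoc_last : (P.snoc h).len (Fin.last P.M) = N - N' := by
  simp only [len, snoc, Fin.succ_last, Fin.snoc_castSucc, Fin.snoc_last, P.last]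

end snoc

theorem LongAfterFirst.snoc {k N' : ℕ} {P : IPart N'} (hP : P.LongAfterFirst k) (h : N' < N)
    (hk : k ≤ N - N') : (P.snoc h).LongAfterFirst k := by
  intro m hm
  induction m using Fin.lastCases with
  | last => rwa [len_snoc_last]
  | cast m => rw [len_snoc_castSucc]; exact hP m hm

theorem exists_eq_snoc (P : IPart N) (hM : P.M ≠ 0) :
    ∃ (N' : ℕ) (Q : IPart N') (h : N' < N), P = Q.snoc h := by
  obtain ⟨(_ | m), b, mono, first, rfl⟩ := P
  · exact absurd rfl hM
  refine ⟨b (Fin.last m).castSucc, ⟨m, Fin.init b, mono.comp Fin.strictMono_castSucc, first, rfl⟩,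
    mono (Fin.castSucc_lt_last _), ?_⟩
  simp only [snoc, mk.injEq, heq_eq_eq, true_and]
  exact (Fin.snoc_init_self b).symm

theorem exists_longAfterFirst_cost_le {k : ℕ} {E : ℕ → ℕ → ℝ} (hE : ∀ l r, 0 ≤ E l r)
    (hE_short : ∀ l r, r ≤ l + k → E l r = 0) (hE_mono : ∀ l r' r, r' ≤ r → E l r' ≤ E l r)
    (P : IPart N) :
    ∃ P' : IPart N, P'.LongAfterFirst k ∧ P'.cost E ≤ P.cost E ∧ P'.M ≤ P.M := by
  induction hM : P.M generalizing N P with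
  | zero => exact ⟨P, fun m => absurd m.isLt (by omega), le_rfl, hM.le⟩
  | succ n ih =>
  obtain ⟨N', Q, hN', rfl⟩ := exists_eq_snoc P (by omega)
  rw [M_snoc] at hM
  by_cases hlong : k ≤ N - N'
  · obtain ⟨Q', hQ', hcost, hQM⟩ := ih Q (Nat.succ_injective hM)
    refine ⟨Q'.snoc hN', hQ'.snoc hN' hlong, ?_, by simp only [M_snoc]; omega⟩
    simp only [cost_snoc]
    linarith
  by_cases hQ : Q.M = 0
  · exact ⟨Q.snoc hN', fun m hm => absurd m.isLt (by simp only [M_snoc]; omega), le_rfl, hM.le⟩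
  obtain ⟨a, R, ha, rfl⟩ := exists_eq_snoc Q hQ
  have hcost : ((R.snoc ha).snoc hN').cost E = R.cost E + E a N' + E N' N := by
    simp only [cost_snoc]
  by_cases hmerge : N ≤ a + k
  · obtain ⟨P', hP', hcost', hP'M⟩ := ih (R.snoc (ha.trans hN')) (Nat.succ_injective hM)
    refine ⟨P', hP', ?_, by simp only [M_snoc] at *; omega⟩
    rw [cost_snoc, hE_short a N hmerge] at hcost'
    linarith [hE a N', hE N' N]
  · obtain ⟨P', hP', hcost', hP'M⟩ := ih (R.snoc (show a < N - k by omega)) (Nat.succ_injective hM)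
    refine ⟨P'.snoc (show N - k < N by omega), hP'.snoc _ (by omega), ?_,
      by simp only [M_snoc] at *; omega⟩
    rw [cost_snoc] at hcost'
    rw [cost_snoc, hcost, hE_short (N - k) N (by omega)]
    linarith [hE_mono a (N - k) N' (by omega), hE N' N]

end IPart

theorem segErrSum_eq_cost {N : ℕ} (k : ℕ) (β : ℝ) (f : Fin N → ℝ) (P : IPart N) :
    segErrSum k β f P = P.cost (segErr k β fun i => if h : i < N then f ⟨i, h⟩ else 0) := by
  refine Finset.sum_congr rfl fun m _ => congrArg (splineError k β) (funext fun i => ?_)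
  exact (dif_pos (P.idx_lt m i) : (if h : _ < N then f ⟨_, h⟩ else 0) = _).symm

theorem exists_partition_min_segment_length_general (N k : ℕ) (β : ℝ)
    (f : Fin N → ℝ) (P : IPart N) :
    ∃ P' : IPart N, (∀ m : Fin P'.M, m.val ≠ 0 → k ≤ P'.len m) ∧
      segErrSum k β f P' ≤ segErrSum k β f P ∧ P'.M ≤ P.M := by
  simp only [segErrSum_eq_cost]
  exact IPart.exists_longAfterFirst_cost_le (segErr_nonneg k β _)
    (fun _ _ => segErr_eq_zero_of_le k β _) (fun l _ _ => segErr_mono_right k β _ l) P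

/-- for each partition `𝓘` there is a partition `𝓘'` all of whose
segments (except possibly the leftmost one) have length at least `k`, with
`Σ_{I'∈𝓘'} E^{I'} ≤ Σ_{I∈𝓘} E^I` and `|𝓘'| ≤ |𝓘|`. -/
theorem exists_partition_min_segment_length (N k : ℕ) (β : ℝ) (hβ : 0 ≤ β)
    (f : Fin N → ℝ) (P : IPart N) :
    ∃ P' : IPart N, (∀ m : Fin P'.M, m.val ≠ 0 → k ≤ P'.len m) ∧
      segErrSum k β f P' ≤ segErrSum k β f P ∧ P'.M ≤ P.M :=
  exists_partition_min_segment_length_general N k β f P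
end

section
/- For fixed k ∈ ℕ, γ > 0, β ∈ (0,∞], the set of data f ∈ ℝ^N for which the higher order Mumford-Shah problem has a non-unique minimizer u* has Lebesgue measure zero. -/
open Finset Matrix

open scoped ENNReal

/-- The higher order Mumford-Shah/Potts functional, with elasticity parameter
`β ∈ (0,∞]` (an extended nonnegative real).  For finite `β` it is
`‖u - f‖₂² + β^{2k} Σ_{I∈𝓘} ‖∇ᵏ u_I‖₂² + γ|𝓘|`; for `β = ∞` (since `∞ * 0 = 0`
in `ℝ≥0∞`), it is finite exactly when `∇ᵏ u_I = 0` on every segment, i.e. when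
`u_I` is a polynomial of degree `≤ k-1` on every segment, and then equals
`‖u - f‖₂² + γ|𝓘|`. -/
noncomputable def msFE {N : ℕ} (k : ℕ) (β : ℝ≥0∞) (γ : ℝ) (f u : Fin N → ℝ)
    (P : IPart N) : ℝ≥0∞ :=
  ENNReal.ofReal (∑ i, (u i - f i) ^ 2)
    + β ^ (2 * k) *
        ENNReal.ofReal (∑ m : Fin P.M, diffEnergy k (P.len m) (P.restrict u m))
    + ENNReal.ofReal (γ * P.M)

/-!
On a fixed partition the functional is, up to the constant `γ|𝓘|`, the squared distance from
`(f, 0)` to the subspace `{(u, β^k ∇ᵏu)}` of a product Euclidean space (for `β = ∞`, to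
`{(u, 0) : ∇ᵏu_I = 0 on every segment}`). Its unique minimizer is therefore `S_𝓘 f` for a symmetric
linear map `S_𝓘` built from the orthogonal projection, and the minimal value is
`⟪f - S_𝓘 f, f⟫ + γ|𝓘|`. Two distinct global minimizers on partitions `𝓘, 𝓙` force `S_𝓘 ≠ S_𝓙` and
`⟪(S_𝓘 - S_𝓙) f, f⟫ = γ|𝓘| - γ|𝓙|`: `f` lies on a level set of a nonzero quadratic form. Such a
level set meets every line in a direction `e` with `⟪(S_𝓘 - S_𝓙) e, e⟫ ≠ 0` in at most two points,
so it is null, and there are only countably many pairs of partitions.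
-/

open MeasureTheory
open scoped RealInnerProductSpace

section QuadraticLevelSet

variable {E : Type*} [NormedAddCommGroup E] [InnerProductSpace ℝ E] [FiniteDimensional ℝ E]
  [MeasurableSpace E] [BorelSpace E] (μ : Measure E) [μ.IsAddHaarMeasure]

theorem LinearMap.IsSymmetric.addHaar_setOf_inner_map_self_eq {T : E →ₗ[ℝ] E}
    (hT : T.IsSymmetric) (hT0 : T ≠ 0) (a : ℝ) : μ {x | ⟪T x, x⟫ = a} = 0 := by
  obtain ⟨e, he⟩ : ∃ e, ⟪T e, e⟫ ≠ 0 := by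
    by_contra! h
    exact hT0 (hT.inner_map_self_eq_zero.1 h)
  have hclosed : IsClosed {x | ⟪T x, x⟫ = a} :=
    isClosed_eq (T.continuous_of_finiteDimensional.inner continuous_id) continuous_const
  rw [measure_eq_zero_iff_ae_notMem]
  refine ae_mem_of_ae_add_linearMap_mem (LinearMap.toSpanSingleton ℝ E e) volume μ
    hclosed.measurableSet.compl fun y => measure_eq_zero_iff_ae_notMem.1 ?_
  have hline : ∀ t : ℝ, ⟪T (y + t • e), y + t • e⟫ =
      ⟪T e, e⟫ * t ^ 2 + 2 * ⟪T y, e⟫ * t + ⟪T y, y⟫ := by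
    intro t
    simp only [map_add, map_smul, inner_add_left, inner_add_right, inner_smul_left,
      inner_smul_right, RCLike.conj_to_real, hT e y, real_inner_comm (T y) e]
    ring
  open Polynomial in
  have hp : C ⟪T e, e⟫ * X ^ 2 + C (2 * ⟪T y, e⟫) * X + C (⟪T y, y⟫ - a) ≠ 0 := by
    intro h
    exact he (by simpa using congrArg (coeff · 2) h)
  refine Set.Finite.measure_zero ((Polynomial.finite_setOfPred_isRoot hp).subset fun t ht => ?_) _
  have ht : ⟪T (y + t • e), y + t • e⟫ = a := ht
  simp only [Set.mem_ofPred_eq, Polynomial.IsRoot.def, Polynomial.eval_add, Polynomial.eval_mul,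
    Polynomial.eval_pow, Polynomial.eval_C, Polynomial.eval_X]
  linarith [hline t]

theorem LinearMap.IsSymmetric.addHaar_setOf_apply_ne_and_inner_sub_eq {S T : E →ₗ[ℝ] E}
    (hS : S.IsSymmetric) (hT : T.IsSymmetric) (a : ℝ) :
    μ {x | S x ≠ T x ∧ ⟪S x, x⟫ - ⟪T x, x⟫ = a} = 0 := by
  by_cases hST : S = T
  · simp [hST]
  · refine measure_mono_null (fun x hx => ?_)
      ((hS.sub hT).addHaar_setOf_inner_map_self_eq μ (sub_ne_zero.2 hST) a)
    simpa [inner_sub_left] using hx.2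

end QuadraticLevelSet

theorem Submodule.norm_sub_starProjection_sq {E : Type*} [NormedAddCommGroup E]
    [InnerProductSpace ℝ E] (K : Submodule ℝ E) [K.HasOrthogonalProjection] (v : E) :
    ‖v - K.starProjection v‖ ^ 2 = ⟪v - K.starProjection v, v⟫ := by
  rw [← real_inner_self_eq_norm_sq, inner_sub_right,
    K.starProjection_inner_eq_zero v _ (K.starProjection_apply_mem v), sub_zero]

theorem Submodule.norm_sub_sq_of_mem {E : Type*} [NormedAddCommGroup E]
    [InnerProductSpace ℝ E] {K : Submodule ℝ E} [K.HasOrthogonalProjection] {w : E} (hw : w ∈ K)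
    (v : E) : ‖w - v‖ ^ 2 = ‖w - K.starProjection v‖ ^ 2 + ‖K.starProjection v - v‖ ^ 2 := by
  have h := K.starProjection_inner_eq_zero v _ (K.sub_mem hw (K.starProjection_apply_mem v))
  rw [← sub_add_sub_cancel w (K.starProjection v) v, norm_add_sq_real, real_inner_comm,
    ← neg_sub v, inner_neg_left, h]
  ring

section PenalizedLeastSquares

variable {E F : Type*} [NormedAddCommGroup E] [InnerProductSpace ℝ E]
  [NormedAddCommGroup F] [InnerProductSpace ℝ F] (L : E →ₗ[ℝ] F) (c : ℝ≥0∞)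

noncomputable def penalizedEnergy (f u : E) : ℝ≥0∞ :=
  ENNReal.ofReal (‖u - f‖ ^ 2) + c * ENNReal.ofReal (‖L u‖ ^ 2)

/- For `c < ∞`, `‖graphLift L c u - (f, 0)‖² = ‖u - f‖² + c ‖L u‖²`. For `c = ∞` the energy is
finite only on `ker L`, where `graphLift L c u = (u, 0)` since `(∞).toReal = 0`. -/
noncomputable def graphLift : E →ₗ[ℝ] WithLp 2 (E × F) :=
  (WithLp.linearEquiv 2 ℝ (E × F)).symm.toLinearMap ∘ₗ
    LinearMap.prod LinearMap.id (√c.toReal • L)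

noncomputable def feasibleSubspace : Submodule ℝ E := if c = ⊤ then LinearMap.ker L else ⊤

noncomputable def energySubspace : Submodule ℝ (WithLp 2 (E × F)) :=
  (feasibleSubspace L c).map (graphLift L c)

variable {L c}

@[simp]
theorem graphLift_fst (u : E) : (graphLift L c u).fst = u := rfl

theorem inner_toLp_mk_zero (h : WithLp 2 (E × F)) (f : E) :
    ⟪h, WithLp.toLp 2 (f, 0)⟫ = ⟪h.fst, f⟫ := by
  simp

theorem norm_graphLift_sub_sq (f u : E) :
    ‖graphLift L c u - WithLp.toLp 2 (f, 0)‖ ^ 2 = ‖u - f‖ ^ 2 + c.toReal * ‖L u‖ ^ 2 := by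
  rw [WithLp.prod_norm_sq_eq_of_L2]
  simp [graphLift, norm_smul, mul_pow]

theorem penalizedEnergy_of_mem {u : E} (hu : u ∈ feasibleSubspace L c) (f : E) :
    penalizedEnergy L c f u = ENNReal.ofReal (‖graphLift L c u - WithLp.toLp 2 (f, 0)‖ ^ 2) := by
  rw [norm_graphLift_sub_sq, penalizedEnergy]
  rcases eq_or_ne c ⊤ with rfl | hc
  · simp_all [feasibleSubspace]
  · rw [ENNReal.ofReal_add (sq_nonneg _) (by positivity), ENNReal.ofReal_mul ENNReal.toReal_nonneg,
      ENNReal.ofReal_toReal hc]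

theorem penalizedEnergy_of_notMem {u : E} (hu : u ∉ feasibleSubspace L c) (f : E) :
    penalizedEnergy L c f u = ⊤ := by
  obtain ⟨rfl, hLu⟩ : c = ⊤ ∧ L u ≠ 0 := by
    by_contra! h
    by_cases hc : c = ⊤ <;> simp_all [feasibleSubspace]
  simp [penalizedEnergy, hLu]

variable [FiniteDimensional ℝ E]

instance : FiniteDimensional ℝ (energySubspace L c) := by
  unfold energySubspace; infer_instance

variable (L c) in
noncomputable def smoother : E →ₗ[ℝ] E :=
  WithLp.fstₗ 2 ℝ E F ∘ₗ (energySubspace L c).starProjection.toLinearMap ∘ₗ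
    (WithLp.linearEquiv 2 ℝ (E × F)).symm.toLinearMap ∘ₗ LinearMap.inl ℝ E F

theorem smoother_apply (f : E) :
    smoother L c f = ((energySubspace L c).starProjection (WithLp.toLp 2 (f, 0))).fst := rfl

theorem smoother_isSymmetric : (smoother L c).IsSymmetric := fun f g => by
  rw [smoother_apply, smoother_apply, ← inner_toLp_mk_zero,
    Submodule.inner_starProjection_left_eq_right, real_inner_comm, inner_toLp_mk_zero,
    real_inner_comm]

theorem smoother_mem_feasibleSubspace (f : E) : smoother L c f ∈ feasibleSubspace L c := by
  obtain ⟨u, hu, hPu⟩ := Submodule.mem_map.1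
    ((energySubspace L c).starProjection_apply_mem (WithLp.toLp 2 (f, 0)))
  rwa [smoother_apply, ← hPu, graphLift_fst]

theorem graphLift_smoother (f : E) :
    graphLift L c (smoother L c f) =
      (energySubspace L c).starProjection (WithLp.toLp 2 (f, 0)) := by
  obtain ⟨u, -, hPu⟩ := Submodule.mem_map.1
    ((energySubspace L c).starProjection_apply_mem (WithLp.toLp 2 (f, 0)))
  rw [smoother_apply, ← hPu, graphLift_fst]

theorem inner_sub_smoother_self (f : E) :
    ⟪f - smoother L c f, f⟫ = ‖WithLp.toLp 2 (f, (0 : F)) -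
      (energySubspace L c).starProjection (WithLp.toLp 2 (f, 0))‖ ^ 2 := by
  rw [Submodule.norm_sub_starProjection_sq, inner_toLp_mk_zero, WithLp.sub_fst, smoother_apply]
  rfl

theorem penalizedEnergy_smoother (f : E) :
    penalizedEnergy L c f (smoother L c f) = ENNReal.ofReal ⟪f - smoother L c f, f⟫ := by
  rw [penalizedEnergy_of_mem (smoother_mem_feasibleSubspace f), graphLift_smoother, norm_sub_rev,
    inner_sub_smoother_self]

theorem eq_smoother_of_penalizedEnergy_le {f u : E}
    (h : penalizedEnergy L c f u ≤ penalizedEnergy L c f (smoother L c f)) :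
    u = smoother L c f := by
  by_cases hu : u ∈ feasibleSubspace L c
  · rw [penalizedEnergy_of_mem hu, penalizedEnergy_of_mem (smoother_mem_feasibleSubspace f),
      graphLift_smoother, ENNReal.ofReal_le_ofReal_iff (sq_nonneg _),
      Submodule.norm_sub_sq_of_mem (K := energySubspace L c) (Submodule.mem_map_of_mem hu)] at h
    have hzero : ‖graphLift L c u - graphLift L c (smoother L c f)‖ ^ 2 = 0 :=
      le_antisymm (by rw [graphLift_smoother]; linarith) (sq_nonneg _)
    rw [sq_eq_zero_iff, norm_eq_zero, sub_eq_zero] at hzero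
    simpa using congrArg WithLp.fst hzero
  · rw [penalizedEnergy_of_notMem hu, penalizedEnergy_smoother] at h
    simp at h

theorem inner_sub_smoother_self_nonneg (f : E) : 0 ≤ ⟪f - smoother L c f, f⟫ := by
  rw [inner_sub_smoother_self]
  positivity

end PenalizedLeastSquares

instance (N : ℕ) : Countable (IPart N) := by
  have hinj : Function.Injective fun P : IPart N => (⟨P.M, P.b⟩ : Σ M : ℕ, Fin (M + 1) → ℕ) := by
    rintro ⟨M, b, _, _, _⟩ ⟨M', b', _, _, _⟩ h
    obtain ⟨rfl, hb⟩ := Sigma.mk.inj_iff.1 h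
    cases eq_of_heq hb
    rfl
  exact hinj.countable

namespace IPart

variable {N : ℕ}

noncomputable def diffOp (k : ℕ) (P : IPart N) :
    EuclideanSpace ℝ (Fin N) →ₗ[ℝ] EuclideanSpace ℝ (Σ m : Fin P.M, Fin (P.len m - k)) where
  toFun u := WithLp.toLp 2 fun i => ∑ j : Fin (k + 1),
    (-1 : ℝ) ^ (k - j.val) * (Nat.choose k j.val : ℝ) *
      P.restrict u.ofLp i.1 ⟨i.2.val + j.val, by have := i.2.isLt; have := j.isLt; omega⟩
  map_add' u v := by
    ext i
    simp [IPart.restrict, mul_add, Finset.sum_add_distrib]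
  map_smul' r u := by
    ext i
    simp only [IPart.restrict, smul_eq_mul, RingHom.id_apply, PiLp.smul_apply, Finset.mul_sum]
    exact Finset.sum_congr rfl fun j _ => by ring

theorem norm_diffOp_sq (k : ℕ) (P : IPart N) (u : EuclideanSpace ℝ (Fin N)) :
    ‖P.diffOp k u‖ ^ 2 = ∑ m, diffEnergy k (P.len m) (P.restrict u.ofLp m) := by
  rw [EuclideanSpace.norm_sq_eq, Fintype.sum_sigma]
  simp [diffOp, diffEnergy]

theorem msFE_eq_penalizedEnergy (k : ℕ) (β : ℝ≥0∞) (γ : ℝ) (f u : Fin N → ℝ) (P : IPart N) :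
    msFE k β γ f u P = penalizedEnergy (P.diffOp k) (β ^ (2 * k)) (WithLp.toLp 2 f)
      (WithLp.toLp 2 u) + ENNReal.ofReal (γ * P.M) := by
  rw [msFE, penalizedEnergy, norm_diffOp_sq, EuclideanSpace.norm_sq_eq]
  simp

variable {k : ℕ} {β : ℝ≥0∞} {γ : ℝ} {P : IPart N} {f u : Fin N → ℝ}

theorem toLp_eq_smoother_of_forall_msFE_le (h : ∀ w, msFE k β γ f u P ≤ msFE k β γ f w P) :
    WithLp.toLp 2 u = smoother (P.diffOp k) (β ^ (2 * k)) (WithLp.toLp 2 f) := by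
  apply eq_smoother_of_penalizedEnergy_le
  have := h (smoother (P.diffOp k) (β ^ (2 * k)) (WithLp.toLp 2 f)).ofLp
  rwa [msFE_eq_penalizedEnergy, msFE_eq_penalizedEnergy, WithLp.toLp_ofLp,
    ENNReal.add_le_add_iff_right ENNReal.ofReal_ne_top] at this

theorem toReal_msFE_of_toLp_eq_smoother
    (h : WithLp.toLp 2 u = smoother (P.diffOp k) (β ^ (2 * k)) (WithLp.toLp 2 f)) :
    (msFE k β γ f u P).toReal = ⟪WithLp.toLp 2 f - smoother (P.diffOp k) (β ^ (2 * k))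
      (WithLp.toLp 2 f), WithLp.toLp 2 f⟫ + max (γ * P.M) 0 := by
  rw [msFE_eq_penalizedEnergy, h, penalizedEnergy_smoother,
    ENNReal.toReal_add ENNReal.ofReal_ne_top ENNReal.ofReal_ne_top,
    ENNReal.toReal_ofReal (inner_sub_smoother_self_nonneg _), ENNReal.toReal_ofReal']

end IPart

theorem mumford_shah_nonunique_measure_zero_general (N k : ℕ) (γ : ℝ)
    (β : ℝ≥0∞) :
    MeasureTheory.volume {f : Fin N → ℝ | ∃ u v : Fin N → ℝ, u ≠ v ∧
      (∃ P : IPart N, ∀ (w : Fin N → ℝ) (Q : IPart N),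
        msFE k β γ f u P ≤ msFE k β γ f w Q) ∧
      (∃ P : IPart N, ∀ (w : Fin N → ℝ) (Q : IPart N),
        msFE k β γ f v P ≤ msFE k β γ f w Q)} = 0 := by
  set S : IPart N → _ := fun P => smoother (P.diffOp k) (β ^ (2 * k))
  refine measure_mono_null (t := WithLp.toLp 2 ⁻¹' ⋃ PQ : IPart N × IPart N,
    {x | S PQ.1 x ≠ S PQ.2 x ∧ ⟪S PQ.1 x, x⟫ - ⟪S PQ.2 x, x⟫ =
      max (γ * PQ.1.M) 0 - max (γ * PQ.2.M) 0}) ?_ ?_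
  · rintro f ⟨u, v, huv, ⟨P, hP⟩, ⟨Q, hQ⟩⟩
    have hu := IPart.toLp_eq_smoother_of_forall_msFE_le fun w => hP w P
    have hv := IPart.toLp_eq_smoother_of_forall_msFE_le fun w => hQ w Q
    have hval := congrArg ENNReal.toReal (le_antisymm (hP v Q) (hQ u P))
    rw [IPart.toReal_msFE_of_toLp_eq_smoother hu, IPart.toReal_msFE_of_toLp_eq_smoother hv,
      inner_sub_left, inner_sub_left] at hval
    refine Set.mem_iUnion.2 ⟨(P, Q), fun h => huv (WithLp.toLp_injective 2 ?_), by linarith⟩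
    exact hu.trans (h.trans hv.symm)
  · refine nonpos_iff_eq_zero.1 (((PiLp.volume_preserving_toLp _).measure_preimage_le _).trans ?_)
    exact (measure_iUnion_null fun _ =>
      smoother_isSymmetric.addHaar_setOf_apply_ne_and_inner_sub_eq volume smoother_isSymmetric _).le

/-- for fixed `k ∈ ℕ`, `γ > 0`, `β ∈ (0,∞]`, the set of data
`f ∈ ℝ^N` for which the higher order Mumford-Shah problem has a non-unique
minimizer `u*` has Lebesgue measure zero. -/
theorem mumford_shah_nonunique_measure_zero (N k : ℕ) (γ : ℝ) (hγ : 0 < γ)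
    (β : ℝ≥0∞) (hβ : 0 < β) :
    MeasureTheory.volume {f : Fin N → ℝ | ∃ u v : Fin N → ℝ, u ≠ v ∧
      (∃ P : IPart N, ∀ (w : Fin N → ℝ) (Q : IPart N),
        msFE k β γ f u P ≤ msFE k β γ f w Q) ∧
      (∃ P : IPart N, ∀ (w : Fin N → ℝ) (Q : IPart N),
        msFE k β γ f v P ≤ msFE k β γ f w Q)} = 0 :=
  mumford_shah_nonunique_measure_zero_general N k γ β
end

section
/- Pruning correctness (search-space truncation): if the current candidate value P_r satisfies P_r < E^{l:r} + γ for some l, then for all l' ≤ l we have E^{l':r} + γ + P*_{l'-1} > P_r; hence P*_r is attained among indices l'' > l (or equals P_r). -/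
open Finset Matrix

/-- Value `Σ_{I∈𝓘} (E^I + γ)` of a partition of `{1,...,r}`, where `E l r` denotes
the (abstract, nonnegative) approximation error on the 0-indexed half-open
interval `[l, r)`. -/
noncomputable def Pval (E : ℕ → ℕ → ℝ) (γ : ℝ) {r : ℕ} (P : IPart r) : ℝ :=
  ∑ m : Fin P.M, (E (P.b m.castSucc) (P.b m.succ) + γ)

/-- `P*_r`: the minimal value of `Σ_{I∈𝓘}(E^I + γ)` over all partitions of
`{1,...,r}` (so `P*_0 = 0`, via the empty partition). -/
noncomputable def Pstar (E : ℕ → ℕ → ℝ) (γ : ℝ) (r : ℕ) : ℝ :=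
  sInf {x | ∃ P : IPart r, x = Pval E γ P}

theorem Pval_nonneg {E : ℕ → ℕ → ℝ} (hE : ∀ l r, 0 ≤ E l r) {γ : ℝ} (hγ : 0 ≤ γ) {r : ℕ}
    (P : IPart r) : 0 ≤ Pval E γ P :=
  Finset.sum_nonneg fun _ _ => add_nonneg (hE _ _) hγ

theorem Pstar_nonneg {E : ℕ → ℕ → ℝ} (hE : ∀ l r, 0 ≤ E l r) {γ : ℝ} (hγ : 0 ≤ γ) (r : ℕ) :
    0 ≤ Pstar E γ r :=
  Real.sInf_nonneg <| by
    rintro x ⟨P, rfl⟩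
    exact Pval_nonneg hE hγ P

theorem truncation_pruning_general (E : ℕ → ℕ → ℝ) (hE : ∀ l r, 0 ≤ E l r)
    (hmono : ∀ l' l r, l' ≤ l → E l r ≤ E l' r)
    (γ : ℝ) (hγ : 0 < γ) (r l : ℕ)
    (Pr : ℝ)
    (hcond : Pr < E l r + γ) :
    ∀ l' ≤ l, Pr < E l' r + γ + Pstar E γ l' := by
  intro l' hl'
  have hPstar := Pstar_nonneg hE hγ.le l'
  have hE_le := hmono l' l r hl'
  linarith

/-- search-space truncation pruning correctness: if the current
candidate value `P_r` (which is `≥ P*_r` and achieved by some admissible last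
segment `[l'', r)`) satisfies `P_r < E^{l:r} + γ` for some `l`, then for all
`l' ≤ l` we have `E^{l':r} + γ + P*_{l'} > P_r`; hence `P*_r` is attained among
indices `> l` (or equals `P_r`). -/
theorem truncation_pruning (E : ℕ → ℕ → ℝ) (hE : ∀ l r, 0 ≤ E l r)
    (hmono : ∀ l' l r, l' ≤ l → E l r ≤ E l' r)
    (γ : ℝ) (hγ : 0 < γ) (r l : ℕ) (hl : l < r)
    (Pr : ℝ) (hach : ∃ l'' < r, Pr = E l'' r + γ + Pstar E γ l'')
    (hge : Pstar E γ r ≤ Pr)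
    (hcond : Pr < E l r + γ) :
    ∀ l' ≤ l, Pr < E l' r + γ + Pstar E γ l' :=
  truncation_pruning_general E hE hmono γ hγ r l Pr hcond
end
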